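/- arXiv:2506.16085 — 9 statements merged into one kernel-verified Lean document; each statement's English description precedes it below -/
import Mathlib

section
/- Let H be a standard subspace of a complex Hilbert space ℋ (i.e., a closed real-linear subspace with H ∩ iH = {0} and H + iH dense). If the modular operator Δ_H is bounded, then H + iH = ℋ, and consequently any standard subspace K with H ⊆ K satisfies K = H. -/
open Complex Submodule Filter Topology

variable {E : Type*} [NormedAddCommGroup E] [InnerProductSpace ℂ E]

/-- Multiplication by `i` as a real-linear map. -/
noncomputable def mulI (E : Type*) [NormedAddCommGroup E] [InnerProductSpace ℂ E] :
    E →ₗ[ℝ] E where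
  toFun x := (Complex.I : ℂ) • x
  map_add' := fun x y => smul_add Complex.I x y
  map_smul' := fun r x => smul_comm Complex.I r x

/-- `H + iH` as a real submodule. -/
noncomputable def cspan (H : Submodule ℝ E) : Submodule ℝ E := H ⊔ H.map (mulI E)

/-- The symplectic complement `K' = {v : Im ⟨v, k⟩ = 0 ∀ k ∈ K}`. -/
noncomputable def sympl (K : Submodule ℝ E) : Submodule ℝ E where
  carrier := {v : E | ∀ k ∈ K, (inner ℂ v k : ℂ).im = 0}
  add_mem' := by
    intro a b ha hb k hk
    simp only [Set.mem_setOf_eq] at *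
    rw [inner_add_left, Complex.add_im, ha k hk, hb k hk, add_zero]
  zero_mem' := by intro k hk; simp
  smul_mem' := by
    intro c v hv k hk
    simp only [Set.mem_setOf_eq] at *
    have h : (c • v : E) = ((c : ℂ)) • v := by
      simp [Complex.coe_smul]
    rw [h, inner_smul_left]
    simp [hv k hk]

/-- The real-orthogonal complement `{v : Re ⟨v, k⟩ = 0 ∀ k ∈ K}`. -/
noncomputable def realPerp (K : Submodule ℝ E) : Submodule ℝ E where
  carrier := {v : E | ∀ k ∈ K, (inner ℂ v k : ℂ).re = 0}
  add_mem' := by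
    intro a b ha hb k hk
    simp only [Set.mem_setOf_eq] at *
    rw [inner_add_left, Complex.add_re, ha k hk, hb k hk, add_zero]
  zero_mem' := by intro k hk; simp
  smul_mem' := by
    intro c v hv k hk
    simp only [Set.mem_setOf_eq] at *
    have h : (c • v : E) = ((c : ℂ)) • v := by
      simp [Complex.coe_smul]
    rw [h, inner_smul_left]
    simp [hv k hk]

/-- A standard subspace: closed, cyclic and separating real subspace. -/
structure IsStandardSubspace (H : Submodule ℝ E) : Prop where
  isClosed : IsClosed (H : Set E)
  cyclic : Dense ((cspan H : Submodule ℝ E) : Set E)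
  separating : H ⊓ H.map (mulI E) = ⊥

/-- Scalar multiplication by a complex number as a real-linear map. -/
noncomputable def smulC (E : Type*) [NormedAddCommGroup E] [InnerProductSpace ℂ E]
    (mu : ℂ) : E →ₗ[ℝ] E where
  toFun x := mu • x
  map_add' := fun x y => smul_add mu x y
  map_smul' := fun r x => smul_comm mu r x

/-! Boundedness of `Δ = S* S` makes `S` bounded on `H + iH`, hence so are the components
`a = (u + S u) / 2` and `b = (u - S u) / 2i` of `u = a + ib`. Thus `(a, b) ↦ a + ib` is bounded
below on the complete space `H × H`, its range `H + iH` is closed, and being dense it is all of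
`ℋ`. If `K ⊇ H` is separating, writing `k ∈ K` as `a + ib` with `a, b ∈ H` puts `ib = k - a`
in `K ∩ iK`, so `b = 0`. -/

lemma mem_cspan_iff {H : Submodule ℝ E} {v : E} :
    v ∈ cspan H ↔ ∃ a ∈ H, ∃ b ∈ H, a + Complex.I • b = v := by
  constructor
  · intro hv
    obtain ⟨a, ha, _, ⟨b, hb, rfl⟩, rfl⟩ := Submodule.mem_sup.1 hv
    exact ⟨a, ha, b, hb, rfl⟩
  · rintro ⟨a, ha, b, hb, rfl⟩
    exact Submodule.add_mem_sup ha ⟨b, hb, rfl⟩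

lemma exists_norm_le_of_norm_inner_le {V : Set E} {S : E → E} {C : ℝ}
    (hC : ∀ v ∈ V, ∀ w ∈ V, ‖(inner ℂ (S v) (S w) : ℂ)‖ ≤ C * ‖v‖ * ‖w‖) :
    ∃ c : ℝ, ∀ v ∈ V, ‖S v‖ ≤ c * ‖v‖ := by
  refine ⟨√(max C 0), fun v hv => ?_⟩
  have hsq : ‖S v‖ ^ 2 ≤ max C 0 * ‖v‖ ^ 2 :=
    calc ‖S v‖ ^ 2 = ‖(inner ℂ (S v) (S v) : ℂ)‖ := by
          rw [inner_self_eq_norm_sq_to_K, norm_pow, RCLike.norm_ofReal, abs_norm]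
      _ ≤ C * ‖v‖ * ‖v‖ := hC v hv v hv
      _ ≤ max C 0 * ‖v‖ ^ 2 := by
          rw [mul_assoc, ← sq]
          exact mul_le_mul_of_nonneg_right (le_max_left C 0) (sq_nonneg _)
  calc ‖S v‖ ≤ √(max C 0 * ‖v‖ ^ 2) := Real.le_sqrt_of_sq_le hsq
    _ = √(max C 0) * ‖v‖ := by
        rw [Real.sqrt_mul (le_max_right C 0), Real.sqrt_sq (norm_nonneg v)]

lemma max_norm_le_of_norm_apply_le {H : Submodule ℝ E} {S : E → E}
    (hS : ∀ h₁ ∈ H, ∀ h₂ ∈ H, S (h₁ + Complex.I • h₂) = h₁ - Complex.I • h₂) {c : ℝ}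
    (hc : ∀ v ∈ cspan H, ‖S v‖ ≤ c * ‖v‖) {a b : E} (ha : a ∈ H) (hb : b ∈ H) :
    max ‖a‖ ‖b‖ ≤ (1 + c) / 2 * ‖a + Complex.I • b‖ := by
  have hSu := hc _ (mem_cspan_iff.2 ⟨a, ha, b, hb, rfl⟩)
  rw [hS a ha b hb] at hSu
  have hna : ‖(2 : ℝ) • a‖ ≤ ‖a + Complex.I • b‖ + ‖a - Complex.I • b‖ := by
    rw [two_smul, show a + a = (a + Complex.I • b) + (a - Complex.I • b) by abel]
    exact norm_add_le _ _
  have hnb : ‖(2 : ℝ) • (Complex.I • b)‖ ≤ ‖a + Complex.I • b‖ + ‖a - Complex.I • b‖ := by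
    rw [two_smul, show Complex.I • b + Complex.I • b =
      (a + Complex.I • b) - (a - Complex.I • b) by abel]
    exact norm_sub_le _ _
  rw [norm_smul, Real.norm_two] at hna hnb
  rw [norm_smul, Complex.norm_I, one_mul] at hnb
  refine max_le ?_ ?_ <;> linarith

noncomputable def cspanMap (H : Submodule ℝ E) : H × H →L[ℝ] E :=
  H.subtypeL.coprod
    (((Complex.I • ContinuousLinearMap.id ℂ E).restrictScalars ℝ).comp H.subtypeL)

lemma cspanMap_apply (H : Submodule ℝ E) (x : H × H) :
    cspanMap H x = x.1 + Complex.I • (x.2 : E) := by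
  simp [cspanMap]

lemma range_cspanMap (H : Submodule ℝ E) : Set.range (cspanMap H) = cspan H := by
  ext v
  simp [cspanMap_apply, mem_cspan_iff]

lemma isClosed_cspan [CompleteSpace E] {H : Submodule ℝ E} (hH : IsClosed (H : Set E)) {M : ℝ}
    (hM : ∀ a ∈ H, ∀ b ∈ H, max ‖a‖ ‖b‖ ≤ M * ‖a + Complex.I • b‖) :
    IsClosed (cspan H : Set E) := by
  have : CompleteSpace H := hH.completeSpace_coe
  have hanti : AntilipschitzWith M.toNNReal (cspanMap H) :=
    (cspanMap H).antilipschitz_of_bound fun x => by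
      rw [Prod.norm_def, cspanMap_apply]
      exact (hM _ x.1.2 _ x.2.2).trans
        (mul_le_mul_of_nonneg_right (Real.le_coe_toNNReal M) (norm_nonneg _))
  rw [← range_cspanMap]
  exact hanti.isClosed_range (cspanMap H).uniformContinuous

lemma le_of_cspan_eq_top {H K : Submodule ℝ E} (hH : cspan H = ⊤)
    (hK : K ⊓ K.map (mulI E) = ⊥) (hHK : H ≤ K) : K ≤ H := by
  intro k hk
  obtain ⟨a, ha, b, hb, rfl⟩ := mem_cspan_iff.1 (hH ▸ Submodule.mem_top : k ∈ cspan H)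
  have hIb : Complex.I • b ∈ K ⊓ K.map (mulI E) :=
    ⟨by simpa using K.sub_mem hk (hHK ha), b, hHK hb, rfl⟩
  rw [hK, Submodule.mem_bot, smul_eq_zero] at hIb
  obtain rfl : b = 0 := hIb.resolve_left Complex.I_ne_zero
  simpa using ha

/-- If the modular operator of a standard subspace `H` is bounded (expressed via boundedness
of the sesquilinear form `(v,w) ↦ ⟪S v, S w⟫ = ⟪w, Δ_H v⟫` of `Δ_H = S_H* S_H`), then
`H + iH = ℋ` and every standard subspace `K ⊇ H` equals `H`. -/
theorem stmt0 {E : Type*} [NormedAddCommGroup E] [InnerProductSpace ℂ E] [CompleteSpace E]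
    (H : Submodule ℝ E) (hH : IsStandardSubspace H)
    (S : E → E)
    (hS : ∀ h₁ ∈ H, ∀ h₂ ∈ H, S (h₁ + Complex.I • h₂) = h₁ - Complex.I • h₂)
    (hbdd : ∃ C : ℝ, ∀ v ∈ (cspan H : Submodule ℝ E), ∀ w ∈ (cspan H : Submodule ℝ E),
      ‖(inner ℂ (S v) (S w) : ℂ)‖ ≤ C * ‖v‖ * ‖w‖) :
    (cspan H : Submodule ℝ E) = ⊤ ∧
      ∀ K : Submodule ℝ E, IsStandardSubspace K → H ≤ K → K = H := by
  obtain ⟨C, hC⟩ := hbdd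
  obtain ⟨c, hc⟩ := exists_norm_le_of_norm_inner_le (V := (cspan H : Set E)) hC
  have hclosed : IsClosed (cspan H : Set E) :=
    isClosed_cspan hH.isClosed fun a ha b hb => max_norm_le_of_norm_apply_le hS hc ha hb
  have htop : cspan H = ⊤ :=
    Submodule.coe_eq_univ.1 (hclosed.closure_eq ▸ hH.cyclic.closure_eq)
  exact ⟨htop, fun K hK hHK => le_antisymm (le_of_cspan_eq_top htop hK.separating hHK) hHK⟩
end

section
/- Let K be a standard subspace of ℋ that is a factor (K ∩ K′ = {0}), and suppose there exists a vector v ∈ ℋ with v ∉ (K + iK) ∪ (K + K′). Then H := K + ℝv is a standard subspace properly containing K with trivial relative symplectic complement: K′ ∩ H = {0}. -/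
open Complex Submodule Filter Topology

variable {E : Type*} [NormedAddCommGroup E] [InnerProductSpace ℂ E]

/-! Separation of `K + ℝv` comes from the complex stability of `K + iK`: if `k₁ + a v = i(k₂ + b v)`
then `(a - b i) v ∈ K + iK`, which forces `a = b = 0` when `v ∉ K + iK`. The relative symplectic
complement is trivial by the modular law, since `K ∩ K' = 0` and `v ∉ K + K'`. -/

lemma Submodule.inf_sup_span_singleton_eq_bot {R M : Type*} [DivisionRing R] [AddCommGroup M]
    [Module R M] {K L : Submodule R M} {v : M} (hKL : K ⊓ L = ⊥) (hv : v ∉ K ⊔ L) :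
    L ⊓ (K ⊔ span R {v}) = ⊥ :=
  disjoint_iff.1 <| (disjoint_iff.2 hKL).symm.disjoint_sup_right_of_disjoint_sup_left
    (disjoint_span_singleton_of_notMem (by rwa [sup_comm]))

section ComplexSpan

variable {K H : Submodule ℝ E} {x v : E}

@[simp]
lemma mulI_apply : mulI E x = I • x := rfl

lemma cspan_mono (h : K ≤ H) : cspan K ≤ cspan H :=
  sup_le_sup h (map_mono h)

lemma le_cspan : K ≤ cspan K := le_sup_left

lemma I_smul_mem_cspan (hx : x ∈ cspan K) : I • x ∈ cspan K := by
  obtain ⟨a, ha, _, ⟨c, hc, rfl⟩, rfl⟩ := mem_sup.1 hx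
  have : I • (a + mulI E c) = mulI E a + -c := by
    simp [smul_smul]
  rw [this]
  exact add_mem (mem_sup_right (mem_map_of_mem ha)) (mem_sup_left (neg_mem hc))

lemma smul_mem_cspan (μ : ℂ) (hx : x ∈ cspan K) : μ • x ∈ cspan K := by
  have : μ • x = μ.re • x + μ.im • (I • x) := by
    conv_lhs => rw [← μ.re_add_im]
    rw [add_smul, mul_smul, Complex.coe_smul, Complex.coe_smul]
  rw [this]
  exact add_mem (smul_mem _ _ hx) (smul_mem _ _ (I_smul_mem_cspan hx))

lemma smul_mem_cspan_iff {μ : ℂ} (hμ : μ ≠ 0) : μ • x ∈ cspan K ↔ x ∈ cspan K :=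
  ⟨fun h => by simpa [smul_smul, inv_mul_cancel₀ hμ] using smul_mem_cspan μ⁻¹ h,
    smul_mem_cspan μ⟩

lemma sup_span_inf_map_mulI_eq_bot (hK : K ⊓ K.map (mulI E) = ⊥) (hv : v ∉ cspan K) :
    (K ⊔ span ℝ {v}) ⊓ (K ⊔ span ℝ {v}).map (mulI E) = ⊥ := by
  rw [eq_bot_iff]
  rintro x ⟨hxH, hxiH⟩
  obtain ⟨y, hy, rfl⟩ := mem_map.1 hxiH
  obtain ⟨k₁, hk₁, _, ha, hx⟩ := mem_sup.1 hxH
  obtain ⟨k₂, hk₂, _, hb, rfl⟩ := mem_sup.1 hy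
  obtain ⟨a, rfl⟩ := mem_span_singleton.1 ha
  obtain ⟨b, rfl⟩ := mem_span_singleton.1 hb
  have hcoeff : ((a : ℂ) - b * I) • v ∈ cspan K := by
    have : ((a : ℂ) - b * I) • v = mulI E k₂ - k₁ := by
      rw [mulI_apply] at hx ⊢
      linear_combination (norm := module) hx
    rw [this]
    exact sub_mem (mem_sup_right (mem_map_of_mem hk₂)) (mem_sup_left hk₁)
  have hab : (a : ℂ) - b * I = 0 := by
    by_contra hne
    exact hv ((smul_mem_cspan_iff hne).1 hcoeff)
  obtain ⟨rfl, rfl⟩ : a = 0 ∧ b = 0 := by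
    simpa [Complex.ext_iff] using hab
  simp only [zero_smul, add_zero] at hx ⊢
  rw [← hK]
  exact ⟨hx ▸ hk₁, mem_map_of_mem hk₂⟩

end ComplexSpan

theorem stmt2_general {E : Type*} [NormedAddCommGroup E] [InnerProductSpace ℂ E]
    (K : Submodule ℝ E) (hK : IsStandardSubspace K)
    (hfactor : K ⊓ sympl K = ⊥)
    (v : E)
    (hv : v ∉ ((cspan K : Submodule ℝ E) : Set E) ∪ ((K ⊔ sympl K : Submodule ℝ E) : Set E)) :
    IsStandardSubspace (K ⊔ Submodule.span ℝ {v}) ∧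
      K < K ⊔ Submodule.span ℝ {v} ∧
      sympl K ⊓ (K ⊔ Submodule.span ℝ {v}) = ⊥ := by
  have hv₁ : v ∉ cspan K := fun h => hv (Or.inl h)
  have hv₂ : v ∉ K ⊔ sympl K := fun h => hv (Or.inr h)
  refine ⟨⟨?_, ?_, ?_⟩, ?_, ?_⟩
  · exact isClosed_sup_finiteDimensional K _ hK.isClosed
  · exact hK.cyclic.mono (cspan_mono le_sup_left)
  · exact sup_span_inf_map_mulI_eq_bot hK.separating hv₁
  · exact lt_sup_iff_notMem.2 fun h => hv₁ (le_cspan h)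
  · exact inf_sup_span_singleton_eq_bot hfactor hv₂

/-- Extending a factor standard subspace `K` by a vector outside `(K + iK) ∪ (K + K')`
yields a proper standard extension with trivial relative symplectic complement. -/
theorem stmt2 {E : Type*} [NormedAddCommGroup E] [InnerProductSpace ℂ E] [CompleteSpace E]
    (K : Submodule ℝ E) (hK : IsStandardSubspace K)
    (hfactor : K ⊓ sympl K = ⊥)
    (v : E)
    (hv : v ∉ ((cspan K : Submodule ℝ E) : Set E) ∪ ((K ⊔ sympl K : Submodule ℝ E) : Set E)) :
    IsStandardSubspace (K ⊔ Submodule.span ℝ {v}) ∧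
      K < K ⊔ Submodule.span ℝ {v} ∧
      sympl K ⊓ (K ⊔ Submodule.span ℝ {v}) = ⊥ :=
  stmt2_general K hK hfactor v hv
end

section
/- Let H be a standard subspace with polarizer D_H (the bounded real-linear operator on H with Im⟨h,k⟩ = Re⟨h, D_H k⟩ for all h,k ∈ H), and let K ⊆ H be a standard subspace with real-orthogonal projection E_K onto K. Then K′ ∩ H = ker(E_K D_H) and H decomposes as the real-orthogonal direct sum H = (K′ ∩ H) ⊕ closure(D_H K). -/
open Complex Submodule Filter Topology

variable {E : Type*} [NormedAddCommGroup E] [InnerProductSpace ℂ E]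

/- On `H` the polarizer is skew-adjoint for `Re ⟨·,·⟩`, so for `h ∈ H` the condition `h ∈ K'`,
i.e. `Re ⟨h, D k⟩ = 0` for all `k ∈ K`, says both that `D h ⊥ K` (equivalently `EK (D h) = 0`)
and that `h ⊥ D K`.  The decomposition is then the real-orthogonal decomposition of `h` along the
closed subspace `closure (D K) ⊆ H`. -/

section Polarizer

variable {H : Submodule ℝ E} {D : E →L[ℝ] E}

theorem re_inner_polarizer_left_eq_neg
    (hDpol : ∀ h ∈ H, ∀ k ∈ H, (inner ℂ h k : ℂ).im = (inner ℂ h (D k) : ℂ).re)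
    {h k : E} (hh : h ∈ H) (hk : k ∈ H) :
    (inner ℂ (D h) k : ℂ).re = -(inner ℂ h (D k) : ℂ).re := by
  rw [← inner_conj_symm, conj_re, ← hDpol k hk h hh, ← inner_conj_symm, conj_im,
    hDpol h hh k hk]

theorem mem_sympl_iff_re_inner_polarizer
    (hDpol : ∀ h ∈ H, ∀ k ∈ H, (inner ℂ h k : ℂ).im = (inner ℂ h (D k) : ℂ).re)
    {K : Submodule ℝ E} (hKH : K ≤ H) {h : E} (hh : h ∈ H) :
    h ∈ sympl K ↔ ∀ k ∈ K, (inner ℂ h (D k) : ℂ).re = 0 :=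
  forall₂_congr fun k hk => by rw [hDpol h hh k (hKH hk)]

theorem mem_sympl_iff_polarizer_mem_realPerp
    (hDpol : ∀ h ∈ H, ∀ k ∈ H, (inner ℂ h k : ℂ).im = (inner ℂ h (D k) : ℂ).re)
    {K : Submodule ℝ E} (hKH : K ≤ H) {h : E} (hh : h ∈ H) :
    h ∈ sympl K ↔ D h ∈ realPerp K := by
  rw [mem_sympl_iff_re_inner_polarizer hDpol hKH hh]
  exact forall₂_congr fun k hk => by
    rw [re_inner_polarizer_left_eq_neg hDpol hh (hKH hk), neg_eq_zero]

end Polarizer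

theorem eq_zero_iff_mem_realPerp_of_isRealProjection {K : Submodule ℝ E} {P : E →L[ℝ] E}
    (hPmem : ∀ v : E, P v ∈ K) (hPfix : ∀ k ∈ K, P k = k)
    (hPsa : ∀ v w : E, (inner ℂ (P v) w : ℂ).re = (inner ℂ v (P w) : ℂ).re) (v : E) :
    P v = 0 ↔ v ∈ realPerp K := by
  constructor
  · intro hv k hk
    rw [← hPfix k hk, ← hPsa, hv, inner_zero_left, zero_re]
  · intro hv
    have hself : (inner ℂ (P v) (P v) : ℂ).re = 0 := by
      rw [hPsa, hPfix _ (hPmem v), hv _ (hPmem v)]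
    rw [← inner_self_eq_zero (𝕜 := ℂ), ← inner_self_ofReal_re, RCLike.re_to_complex, hself,
      RCLike.ofReal_zero]

theorem re_inner_eq_zero_of_mem_closure {S : Set E} {x : E}
    (hS : ∀ s ∈ S, (inner ℂ x s : ℂ).re = 0) {y : E} (hy : y ∈ closure S) :
    (inner ℂ x y : ℂ).re = 0 := by
  have hclosed : IsClosed {y : E | (inner ℂ x y : ℂ).re = 0} :=
    isClosed_eq (continuous_re.comp (continuous_const.inner continuous_id)) continuous_const
  exact closure_minimal hS hclosed hy

theorem exists_eq_add_re_inner_eq_zero [CompleteSpace E] (M : Submodule ℝ E)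
    (hM : IsClosed (M : Set E)) (v : E) :
    ∃ x, (∀ m ∈ M, (inner ℂ x m : ℂ).re = 0) ∧ ∃ y ∈ M, v = x + y := by
  let _ : InnerProductSpace ℝ E := InnerProductSpace.complexToReal
  have : CompleteSpace M := hM.completeSpace_coe
  obtain ⟨y, hy, x, hx, rfl⟩ := M.exists_add_mem_mem_orthogonal v
  refine ⟨x, fun m hm => ?_, y, hy, add_comm y x⟩
  rw [← inner_conj_symm, conj_re]
  exact (real_inner_eq_re_inner ℂ m x).symm.trans (hx m hm)

theorem stmt5_general {E : Type*} [NormedAddCommGroup E] [InnerProductSpace ℂ E] [CompleteSpace E]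
    (H K : Submodule ℝ E) (hH : IsStandardSubspace H)
    (hKH : K ≤ H)
    (D : E →L[ℝ] E) (hDmem : ∀ h ∈ H, D h ∈ H)
    (hDpol : ∀ h ∈ H, ∀ k ∈ H, (inner ℂ h k : ℂ).im = (inner ℂ h (D k) : ℂ).re)
    (EK : E →L[ℝ] E) (hEKmem : ∀ v : E, EK v ∈ K) (hEKfix : ∀ k ∈ K, EK k = k)
    (hEKsa : ∀ v w : E, (inner ℂ (EK v) w : ℂ).re = (inner ℂ v (EK w) : ℂ).re) :
    ((sympl K ⊓ H : Submodule ℝ E) : Set E) = {h : E | h ∈ H ∧ EK (D h) = 0} ∧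
    (∀ x ∈ sympl K ⊓ H, ∀ y ∈ closure (D '' (K : Set E)), (inner ℂ x y : ℂ).re = 0) ∧
    (∀ h ∈ H, ∃ x ∈ sympl K ⊓ H, ∃ y ∈ closure (D '' (K : Set E)), h = x + y) := by
  refine ⟨?_, ?_, ?_⟩
  · ext h
    simp only [SetLike.mem_coe, mem_inf, Set.mem_ofPred_eq,
      eq_zero_iff_mem_realPerp_of_isRealProjection hEKmem hEKfix hEKsa]
    exact ⟨fun ⟨hs, hh⟩ => ⟨hh, (mem_sympl_iff_polarizer_mem_realPerp hDpol hKH hh).1 hs⟩,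
      fun ⟨hh, hp⟩ => ⟨(mem_sympl_iff_polarizer_mem_realPerp hDpol hKH hh).2 hp, hh⟩⟩
  · rintro x ⟨hxs, hxH⟩ y hy
    refine re_inner_eq_zero_of_mem_closure ?_ hy
    rintro _ ⟨k, hk, rfl⟩
    exact (mem_sympl_iff_re_inner_polarizer hDpol hKH hxH).1 hxs k hk
  · intro h hh
    set M : Submodule ℝ E := (K.map (D : E →ₗ[ℝ] E)).topologicalClosure
    have hMcoe : (M : Set E) = closure (D '' (K : Set E)) := by
      simp only [M, topologicalClosure_coe, map_coe, ContinuousLinearMap.coe_coe]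
    have hMH : (M : Set E) ⊆ H := hMcoe ▸
      closure_minimal (by rintro _ ⟨k, hk, rfl⟩; exact hDmem k (hKH hk)) hH.isClosed
    obtain ⟨x, hxM, y, hyM, rfl⟩ :=
      exists_eq_add_re_inner_eq_zero M (isClosed_topologicalClosure _) h
    have hxH : x ∈ H := by simpa using H.sub_mem hh (hMH hyM)
    have hxK' : x ∈ sympl K := (mem_sympl_iff_re_inner_polarizer hDpol hKH hxH).2
      fun k hk => hxM _ (le_topologicalClosure _ ⟨k, hk, rfl⟩)
    exact ⟨x, ⟨hxK', hxH⟩, y, hMcoe ▸ hyM, rfl⟩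

/-- For an inclusion `K ⊆ H` of standard subspaces, with `D` the polarizer of `H` and
`EK` the real-orthogonal projection onto `K`: `K' ∩ H = ker (EK ∘ D)` and
`H = (K' ∩ H) ⊕ᵣ closure (D K)` as a real-orthogonal direct sum. -/
theorem stmt5 {E : Type*} [NormedAddCommGroup E] [InnerProductSpace ℂ E] [CompleteSpace E]
    (H K : Submodule ℝ E) (hH : IsStandardSubspace H) (hK : IsStandardSubspace K)
    (hKH : K ≤ H)
    (D : E →L[ℝ] E) (hDmem : ∀ h ∈ H, D h ∈ H)
    (hDpol : ∀ h ∈ H, ∀ k ∈ H, (inner ℂ h k : ℂ).im = (inner ℂ h (D k) : ℂ).re)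
    (EK : E →L[ℝ] E) (hEKmem : ∀ v : E, EK v ∈ K) (hEKfix : ∀ k ∈ K, EK k = k)
    (hEKsa : ∀ v w : E, (inner ℂ (EK v) w : ℂ).re = (inner ℂ v (EK w) : ℂ).re) :
    ((sympl K ⊓ H : Submodule ℝ E) : Set E) = {h : E | h ∈ H ∧ EK (D h) = 0} ∧
    (∀ x ∈ sympl K ⊓ H, ∀ y ∈ closure (D '' (K : Set E)), (inner ℂ x y : ℂ).re = 0) ∧
    (∀ h ∈ H, ∃ x ∈ sympl K ⊓ H, ∃ y ∈ closure (D '' (K : Set E)), h = x + y) :=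
  stmt5_general H K hH hKH D hDmem hDpol EK hEKmem hEKfix hEKsa
end

section
/- Let K ⊆ H be an inclusion of standard subspaces with H a factor, and assume D_H K is closed. Then (K′ ∩ H)′ ∩ D_H K = K ∩ D_H K. -/
open Complex Submodule Filter Topology

variable {E : Type*} [NormedAddCommGroup E] [InnerProductSpace ℂ E]

/-!
Write `L = D K` and `M = K′ ∩ H`. Since `Re⟨v, D k⟩ = Im⟨v, k⟩` on `H`, the polarizer identifies
`M` with the real orthogonal complement of `L` inside `H`. If `x ∈ H ∩ M′`, the same identity
puts `D x` in `H ∩ M^⊥`; as `L` is closed, `H = L ⊕ (L^⊥ ∩ H)`, so `H ∩ M^⊥ = L` and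
`D x = D k` for some `k ∈ K`. The factor condition makes `D` injective on `H`, whence `x = k ∈ K`.
-/

open Complex Submodule

theorem Submodule.inf_orthogonal_orthogonal_inf_le {𝕜 F : Type*} [RCLike 𝕜]
    [NormedAddCommGroup F] [InnerProductSpace 𝕜 F] {L H : Submodule 𝕜 F}
    [L.HasOrthogonalProjection] (hLH : L ≤ H) : H ⊓ (Lᗮ ⊓ H)ᗮ ≤ L := by
  rintro w ⟨hwH, hw⟩
  rw [← sup_orthogonal_inf_of_hasOrthogonalProjection hLH] at hwH
  obtain ⟨a, ha, b, hb, rfl⟩ := mem_sup.mp hwH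
  have hba : inner 𝕜 b a = 0 := (mem_orthogonal' L b).mp hb.1 a ha
  have hbb : inner 𝕜 b b = 0 := by
    simpa [inner_add_right, hba] using (mem_orthogonal _ _).mp hw b hb
  simpa [inner_self_eq_zero.mp hbb] using ha

theorem im_inner_symm (x y : E) : (inner ℂ x y).im = -(inner ℂ y x).im := by
  rw [← inner_conj_symm, conj_im]

theorem sympl_antitone {K₁ K₂ : Submodule ℝ E} (h : K₁ ≤ K₂) : sympl K₂ ≤ sympl K₁ :=
  fun _ hv k hk => hv k (h hk)

theorem le_sympl_sympl (K : Submodule ℝ E) : K ≤ sympl (sympl K) := fun x hx v hv => by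
  rw [im_inner_symm, hv x hx, neg_zero]

section Polarizer

attribute [local instance] InnerProductSpace.complexToReal

variable {H : Submodule ℝ E} {D : E →L[ℝ] E}

theorem injOn_of_inf_sympl_eq_bot
    (hDpol : ∀ h ∈ H, ∀ k ∈ H, (inner ℂ h k : ℂ).im = (inner ℂ h (D k) : ℂ).re)
    (hfac : H ⊓ sympl H = ⊥) : Set.InjOn D H := by
  intro x hx y hy hxy
  have hsub : x - y ∈ H ⊓ sympl H := by
    refine ⟨H.sub_mem hx hy, fun k hk => ?_⟩
    rw [im_inner_symm, hDpol k hk _ (H.sub_mem hx hy), map_sub, hxy, sub_self,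
      inner_zero_right, zero_re, neg_zero]
  rw [hfac, Submodule.mem_bot] at hsub
  exact sub_eq_zero.mp hsub

theorem sympl_inf_eq_orthogonal_map_inf {K : Submodule ℝ E}
    (hDpol : ∀ h ∈ H, ∀ k ∈ H, (inner ℂ h k : ℂ).im = (inner ℂ h (D k) : ℂ).re)
    (hKH : K ≤ H) : sympl K ⊓ H = (K.map (D : E →ₗ[ℝ] E))ᗮ ⊓ H := by
  ext v
  simp only [mem_inf]
  refine and_congr_left fun hv => ?_
  simp only [mem_orthogonal', Submodule.mem_map, forall_exists_index, and_imp,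
    forall_apply_eq_imp_iff₂]
  exact forall₂_congr fun k hk => by rw [hDpol v hv k (hKH hk)]; rfl

theorem map_mem_orthogonal_of_mem_sympl {M : Submodule ℝ E}
    (hDpol : ∀ h ∈ H, ∀ k ∈ H, (inner ℂ h k : ℂ).im = (inner ℂ h (D k) : ℂ).re)
    (hMH : M ≤ H) {x : E} (hxH : x ∈ H) (hx : x ∈ sympl M) : D x ∈ Mᗮ := by
  refine (mem_orthogonal _ _).mpr fun v hv => ?_
  change (inner ℂ v (D x)).re = 0
  rw [← hDpol v (hMH hv) x hxH, im_inner_symm, hx v hv, neg_zero]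

theorem inf_sympl_sympl_inf_le [CompleteSpace E] {K : Submodule ℝ E} (hKH : K ≤ H)
    (hfac : H ⊓ sympl H = ⊥) (hDmem : ∀ h ∈ H, D h ∈ H)
    (hDpol : ∀ h ∈ H, ∀ k ∈ H, (inner ℂ h k : ℂ).im = (inner ℂ h (D k) : ℂ).re)
    (hclosed : IsClosed (D '' (K : Set E))) : H ⊓ sympl (sympl K ⊓ H) ≤ K := by
  set L := K.map (D : E →ₗ[ℝ] E)
  have hLH : L ≤ H := map_le_iff_le_comap.mpr fun k hk => hDmem k (hKH hk)
  have hLclosed : IsClosed (L : Set E) := by simpa [L, map_coe] using hclosed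
  have : CompleteSpace L := hLclosed.completeSpace_coe
  rintro x ⟨hxH, hx⟩
  have hDx : D x ∈ H ⊓ (Lᗮ ⊓ H)ᗮ := by
    refine ⟨hDmem x hxH, ?_⟩
    rw [← sympl_inf_eq_orthogonal_map_inf hDpol hKH]
    exact map_mem_orthogonal_of_mem_sympl hDpol inf_le_right hxH hx
  obtain ⟨k, hk, hkx⟩ := inf_orthogonal_orthogonal_inf_le hLH hDx
  rwa [← injOn_of_inf_sympl_eq_bot hDpol hfac (hKH hk) hxH hkx]

end Polarizer

theorem stmt6_general {E : Type*} [NormedAddCommGroup E] [InnerProductSpace ℂ E] [CompleteSpace E]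
    (H K : Submodule ℝ E)
    (hKH : K ≤ H) (hfac : H ⊓ sympl H = ⊥)
    (D : E →L[ℝ] E) (hDmem : ∀ h ∈ H, D h ∈ H)
    (hDpol : ∀ h ∈ H, ∀ k ∈ H, (inner ℂ h k : ℂ).im = (inner ℂ h (D k) : ℂ).re)
    (hclosed : IsClosed (D '' (K : Set E))) :
    ((sympl (sympl K ⊓ H) : Submodule ℝ E) : Set E) ∩ (D '' (K : Set E))
      = (K : Set E) ∩ (D '' (K : Set E)) := by
  ext x
  refine and_congr_left fun hxD => ⟨fun hx => ?_, fun hx => ?_⟩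
  · obtain ⟨k, hk, rfl⟩ := hxD
    exact inf_sympl_sympl_inf_le hKH hfac hDmem hDpol hclosed ⟨hDmem k (hKH hk), hx⟩
  · exact sympl_antitone inf_le_left (le_sympl_sympl K hx)

/-- If `H` is a factor and `D_H K` is closed, then `(K' ∩ H)' ∩ D_H K = K ∩ D_H K`. -/
theorem stmt6 {E : Type*} [NormedAddCommGroup E] [InnerProductSpace ℂ E] [CompleteSpace E]
    (H K : Submodule ℝ E) (hH : IsStandardSubspace H) (hK : IsStandardSubspace K)
    (hKH : K ≤ H) (hfac : H ⊓ sympl H = ⊥)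
    (D : E →L[ℝ] E) (hDmem : ∀ h ∈ H, D h ∈ H)
    (hDpol : ∀ h ∈ H, ∀ k ∈ H, (inner ℂ h k : ℂ).im = (inner ℂ h (D k) : ℂ).re)
    (hclosed : IsClosed (D '' (K : Set E))) :
    ((sympl (sympl K ⊓ H) : Submodule ℝ E) : Set E) ∩ (D '' (K : Set E))
      = (K : Set E) ∩ (D '' (K : Set E)) :=
  stmt6_general H K hKH hfac D hDmem hDpol hclosed
end

section
/- Let K ⊆ H be standard subspaces and D_H the polarizer of H. Then K ∩ D_H K ∩ Dom(Δ_H) ⊆ K ∩ (iK + iH′) ⊆ K ∩ D_H K. -/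
/-!
Both inclusions rest on the polarizer identity `Im ⟨h, k⟩ = Re ⟨h, D k⟩` on `H`. For `v = D u`
with `u ∈ K` it says exactly that `u - i v ∈ H'`, so `v = i(-u) + i(u - i v) ∈ iK + iH'`.
Conversely, if `v = i k + i w ∈ K` with `k ∈ K`, `w ∈ H'`, the same identity shows that
`v + D k ∈ H` is real-orthogonal to `H`, hence zero, so `v = D (-k)`.
-/

open Complex Submodule Filter Topology

variable {E : Type*} [NormedAddCommGroup E] [InnerProductSpace ℂ E]

section Polarizer

variable {H : Submodule ℝ E}

theorem eq_zero_of_mem_of_mem_realPerp {x : E} (hx : x ∈ H) (hx' : x ∈ realPerp H) : x = 0 :=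
  re_inner_self_nonpos (𝕜 := ℂ) |>.mp (hx' x hx).le

theorem im_inner_eq_zero_of_mem_sympl {h w : E} (hh : h ∈ H) (hw : w ∈ sympl H) :
    (inner ℂ h w).im = 0 := by
  rw [← inner_conj_symm, conj_im, hw h hh, neg_zero]

variable {D : E → E} (hDpol : ∀ h ∈ H, ∀ k ∈ H, (inner ℂ h k).im = (inner ℂ h (D k)).re)
include hDpol

theorem sub_I_smul_polarizer_mem_sympl {u : E} (hu : u ∈ H) : u - I • D u ∈ sympl H := by
  intro h hh
  rw [← inner_conj_symm, conj_im, neg_eq_zero, inner_sub_right, inner_smul_right, sub_im,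
    I_mul_im, hDpol h hh u hu, sub_self]

theorem polarizer_eq_neg_of_eq_I_smul_add (hDmem : ∀ h ∈ H, D h ∈ H) {v k w : E}
    (hv : v ∈ H) (hk : k ∈ H) (hw : w ∈ sympl H) (hvkw : v = I • k + I • w) : D k = -v := by
  have hperp : v + D k ∈ realPerp H := by
    intro h hh
    rw [← inner_conj_symm, conj_re, hvkw, inner_add_right, inner_add_right, inner_smul_right,
      inner_smul_right, add_re, add_re, I_mul_re, I_mul_re, ← hDpol h hh k hk,
      im_inner_eq_zero_of_mem_sympl hh hw]
    ring
  exact eq_neg_of_add_eq_zero_right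
    (eq_zero_of_mem_of_mem_realPerp (H.add_mem hv (hDmem k hk)) hperp)

end Polarizer

theorem stmt7_general {E : Type*} [NormedAddCommGroup E] [InnerProductSpace ℂ E]
    (H K : Submodule ℝ E)
    (hKH : K ≤ H)
    (D : E →L[ℝ] E) (hDmem : ∀ h ∈ H, D h ∈ H)
    (hDpol : ∀ h ∈ H, ∀ k ∈ H, (inner ℂ h k : ℂ).im = (inner ℂ h (D k) : ℂ).re)
    (domDelta : Set E) :
    ((K : Set E) ∩ (D '' (K : Set E)) ∩ domDelta
        ⊆ (K : Set E) ∩ ((K.map (mulI E) ⊔ (sympl H).map (mulI E) : Submodule ℝ E) : Set E)) ∧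
    ((K : Set E) ∩ ((K.map (mulI E) ⊔ (sympl H).map (mulI E) : Submodule ℝ E) : Set E)
        ⊆ (K : Set E) ∩ (D '' (K : Set E))) := by
  constructor
  · rintro _ ⟨⟨hvK, u, huK, rfl⟩, -⟩
    refine ⟨hvK, mem_sup.mpr ⟨mulI E (-u), mem_map_of_mem (neg_mem huK), mulI E (u - I • D u),
      mem_map_of_mem (sub_I_smul_polarizer_mem_sympl hDpol (hKH huK)), ?_⟩⟩
    change I • -u + I • (u - I • D u) = D u
    rw [smul_sub, smul_smul, I_mul_I, neg_one_smul, smul_neg]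
    abel
  · rintro v ⟨hvK, hv⟩
    obtain ⟨_, ⟨k, hkK, rfl⟩, _, ⟨w, hw, rfl⟩, hvkw⟩ := mem_sup.mp hv
    refine ⟨hvK, -k, neg_mem hkK, ?_⟩
    rw [map_neg, polarizer_eq_neg_of_eq_I_smul_add hDpol hDmem (hKH hvK) (hKH hkK) hw hvkw.symm,
      neg_neg]

/-- `K ∩ D_H K ∩ Dom Δ_H ⊆ K ∩ (iK + iH') ⊆ K ∩ D_H K`, where
`Dom Δ_H = {v ∈ H + iH : S_H v ∈ H' + iH'}`. -/
theorem stmt7 {E : Type*} [NormedAddCommGroup E] [InnerProductSpace ℂ E] [CompleteSpace E]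
    (H K : Submodule ℝ E) (hH : IsStandardSubspace H) (hK : IsStandardSubspace K)
    (hKH : K ≤ H)
    (S : E → E)
    (hS : ∀ h₁ ∈ H, ∀ h₂ ∈ H, S (h₁ + Complex.I • h₂) = h₁ - Complex.I • h₂)
    (D : E →L[ℝ] E) (hDmem : ∀ h ∈ H, D h ∈ H)
    (hDpol : ∀ h ∈ H, ∀ k ∈ H, (inner ℂ h k : ℂ).im = (inner ℂ h (D k) : ℂ).re)
    (domDelta : Set E)
    (hdom : domDelta = {v : E | v ∈ (cspan H : Submodule ℝ E) ∧
        S v ∈ (cspan (sympl H) : Submodule ℝ E)}) :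
    ((K : Set E) ∩ (D '' (K : Set E)) ∩ domDelta
        ⊆ (K : Set E) ∩ ((K.map (mulI E) ⊔ (sympl H).map (mulI E) : Submodule ℝ E) : Set E)) ∧
    ((K : Set E) ∩ ((K.map (mulI E) ⊔ (sympl H).map (mulI E) : Submodule ℝ E) : Set E)
        ⊆ (K : Set E) ∩ (D '' (K : Set E))) :=
  stmt7_general H K hKH D hDmem hDpol domDelta
end

section
/- Let H be a standard subspace and (U_n) a sequence of unitaries with U_n H ⊆ H, U_{n+1}H ⊆ U_n H for all n, and such that U_n converges in the weak operator topology to a unitary U with UH ⊆ H. Then ⋂_n U_n H = UH. -/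
open Complex Submodule Filter Topology

variable {E : Type*} [NormedAddCommGroup E] [InnerProductSpace ℂ E]

/-
Both inclusions come from one fact: a closed real subspace `K` of a complex Hilbert space is
weakly sequentially closed, because `K = Kᗮᗮ` for the real inner product `Re ⟪·, ·⟫`.
If `x ∈ U_n H` for every `n`, then the vectors `U_n⁻¹ x ∈ H` converge weakly to `U⁻¹ x`.
Conversely, for `h ∈ H` and fixed `m`, the images decrease, so `U_m⁻¹ U_n h ∈ H` for `n ≥ m`,
and these vectors converge weakly to `U_m⁻¹ U h`.
-/

section WeakLimits

variable {F ι : Type*} [NormedAddCommGroup F] [InnerProductSpace ℂ F] {l : Filter ι}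

section

attribute [local instance] InnerProductSpace.complexToReal

theorem Submodule.mem_of_tendsto_inner [CompleteSpace E] [l.NeBot] {K : Submodule ℝ E}
    (hK : IsClosed (K : Set E)) {x : ι → E} {z : E} (hx : ∀ᶠ n in l, x n ∈ K)
    (hz : ∀ y, Tendsto (fun n => inner ℂ y (x n)) l (𝓝 (inner ℂ y z))) : z ∈ K := by
  have : CompleteSpace K := hK.completeSpace_coe
  rw [← K.orthogonal_orthogonal, mem_orthogonal]
  intro u hu
  have hre : Tendsto (fun n => (inner ℂ u (x n)).re) l (𝓝 (inner ℂ u z).re) :=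
    (continuous_re.tendsto _).comp (hz u)
  refine tendsto_nhds_unique hre (tendsto_const_nhds.congr' ?_)
  filter_upwards [hx] with n hn
  exact ((K.mem_orthogonal' u).1 hu _ hn).symm

end

theorem tendsto_inner_map_of_tendsto_inner (V : E ≃ₗᵢ[ℂ] F) {x : ι → E} {z : E}
    (hz : ∀ y, Tendsto (fun n => inner ℂ y (x n)) l (𝓝 (inner ℂ y z))) (y : F) :
    Tendsto (fun n => inner ℂ y (V (x n))) l (𝓝 (inner ℂ y (V z))) := by
  simpa only [V.symm.inner_map_eq_flip, V.symm_symm] using hz (V.symm y)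

theorem tendsto_inner_symm_of_tendsto_inner {U : ι → E ≃ₗᵢ[ℂ] F} {V : E ≃ₗᵢ[ℂ] F}
    (hUV : ∀ x y, Tendsto (fun n => inner ℂ x (U n y)) l (𝓝 (inner ℂ x (V y))))
    (x : F) (y : E) :
    Tendsto (fun n => inner ℂ y ((U n).symm x)) l (𝓝 (inner ℂ y (V.symm x))) := by
  simp only [← LinearIsometryEquiv.inner_map_eq_flip]
  simpa only [Function.comp_def, inner_conj_symm] using
    (continuous_conj.tendsto _).comp (hUV x y)

theorem iInter_image_subset_image_of_tendsto_inner [CompleteSpace E] [l.NeBot]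
    {H : Submodule ℝ E} (hH : IsClosed (H : Set E)) {U : ι → E ≃ₗᵢ[ℂ] E} {V : E ≃ₗᵢ[ℂ] E}
    (hUV : ∀ x y, Tendsto (fun n => inner ℂ x (U n y)) l (𝓝 (inner ℂ x (V y)))) :
    ⋂ n, U n '' H ⊆ V '' H := by
  intro x hx
  rw [V.image_eq_preimage_symm]
  refine H.mem_of_tendsto_inner hH (Eventually.of_forall fun n => ?_)
    (tendsto_inner_symm_of_tendsto_inner hUV x)
  simpa only [(U n).image_eq_preimage_symm, Set.mem_preimage, SetLike.mem_coe] using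
    Set.mem_iInter.1 hx n

theorem image_subset_iInter_image_of_tendsto_inner [CompleteSpace E] [SemilatticeSup ι]
    [Nonempty ι] {H : Submodule ℝ E} (hH : IsClosed (H : Set E)) {U : ι → E ≃ₗᵢ[ℂ] E}
    {V : E ≃ₗᵢ[ℂ] E} (hU : Antitone fun n => U n '' H)
    (hUV : ∀ x y, Tendsto (fun n => inner ℂ x (U n y)) atTop (𝓝 (inner ℂ x (V y)))) :
    V '' H ⊆ ⋂ n, U n '' H := by
  rintro _ ⟨h, hh, rfl⟩
  refine Set.mem_iInter.2 fun m => ?_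
  rw [(U m).image_eq_preimage_symm]
  refine H.mem_of_tendsto_inner hH ?_
    (tendsto_inner_map_of_tendsto_inner (U m).symm (hUV · h))
  filter_upwards [eventually_ge_atTop m] with n hn
  simpa only [(U m).image_eq_preimage_symm, Set.mem_preimage, SetLike.mem_coe] using
    hU hn (Set.mem_image_of_mem _ hh)

end WeakLimits

theorem stmt8_general {E : Type*} [NormedAddCommGroup E] [InnerProductSpace ℂ E] [CompleteSpace E]
    (H : Submodule ℝ E) (hH : IsStandardSubspace H)
    (U : ℕ → (E ≃ₗᵢ[ℂ] E)) (Ulim : E ≃ₗᵢ[ℂ] E)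
    (hmono : ∀ n, (U (n + 1)) '' (H : Set E) ⊆ (U n) '' (H : Set E))
    (hweak : ∀ x y : E,
      Filter.Tendsto (fun n => (inner ℂ x (U n y) : ℂ)) Filter.atTop (nhds (inner ℂ x (Ulim y)))) :
    (⋂ n, (U n) '' (H : Set E)) = Ulim '' (H : Set E) :=
  (iInter_image_subset_image_of_tendsto_inner hH.isClosed hweak).antisymm
    (image_subset_iInter_image_of_tendsto_inner hH.isClosed (antitone_nat_of_succ_le hmono) hweak)

/-- For a decreasing sequence of unitary images `U_n H` with `U_n → U` in the weak
operator topology and `UH ⊆ H`, one has `⋂ₙ U_n H = U H`. -/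
theorem stmt8 {E : Type*} [NormedAddCommGroup E] [InnerProductSpace ℂ E] [CompleteSpace E]
    (H : Submodule ℝ E) (hH : IsStandardSubspace H)
    (U : ℕ → (E ≃ₗᵢ[ℂ] E)) (Ulim : E ≃ₗᵢ[ℂ] E)
    (hUH : ∀ n, (U n) '' (H : Set E) ⊆ (H : Set E))
    (hmono : ∀ n, (U (n + 1)) '' (H : Set E) ⊆ (U n) '' (H : Set E))
    (hUlimH : Ulim '' (H : Set E) ⊆ (H : Set E))
    (hweak : ∀ x y : E,
      Filter.Tendsto (fun n => (inner ℂ x (U n y) : ℂ)) Filter.atTop (nhds (inner ℂ x (Ulim y)))) :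
    (⋂ n, (U n) '' (H : Set E)) = Ulim '' (H : Set E) :=
  stmt8_general H hH U Ulim hmono hweak
end

section
/- Let K ⊆ H be standard subspaces. If Δ_H^{1/4} E_K is not compact, then there exist sequences of unit vectors (k_n) ⊆ K and (h_n′) ⊆ H′ both converging weakly to zero such that ⟨h_n′, k_n⟩ does not converge to 0. -/
/-!
Since `T` factors through `E_K`, non-compactness of `T` yields `ε > 0` and a real-orthonormal
sequence `e_n` in `K` with `‖T e_n‖ ≥ ε`: otherwise, for every `δ > 0`, `T` would lie within
`δ ‖E_K‖` of the finite-rank operator `T P_V E_K`, where `P_V` projects onto the span of finitely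
many vectors of `K`, and norm limits of compact operators are compact. A real-orthonormal sequence
is weakly null by Bessel's inequality (for `Im ⟨x, e_n⟩` apply it to `i x`), and so is its image
under the antiunitary `J`. Finally `h'_n = J e_n ∈ J H = H'` and
`⟨J e_n, e_n⟩ = conj ⟨e_n, J e_n⟩ = ‖T e_n‖² ≥ ε²`.
-/

open Complex Submodule Filter Topology

variable {E : Type*} [NormedAddCommGroup E] [InnerProductSpace ℂ E]

theorem isCompactOperator_of_forall_small_on_orthogonal {F G : Type*} [NormedAddCommGroup F]
    [InnerProductSpace ℝ F] [NormedAddCommGroup G] [NormedSpace ℝ G] [CompleteSpace G]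
    (K : Submodule ℝ F) (P : F →L[ℝ] F) (hP : ∀ v, P v ∈ K) (T : F →L[ℝ] G)
    (hTP : ∀ v, T v = T (P v))
    (hsmall : ∀ δ > 0, ∃ s : Finset F, (s : Set F) ⊆ K ∧
      ∀ y ∈ K, (∀ x ∈ s, inner ℝ x y = 0) → ‖T y‖ ≤ δ * ‖y‖) :
    IsCompactOperator T := by
  refine isClosed_setOfPred_isCompactOperator.closure_subset
    (Metric.mem_closure_iff.2 fun ε hε => ?_)
  obtain ⟨s, hsK, hs⟩ := hsmall (ε / (2 * (‖P‖ + 1))) (by positivity)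
  set V := Submodule.span ℝ (s : Set F)
  refine ⟨T ∘L V.subtypeL ∘L V.orthogonalProjectionOnto ∘L P,
    (isCompactOperator_of_locallyCompactSpace_dom (V.orthogonalProjectionOnto ∘L P)).clm_comp
      (T ∘L V.subtypeL), ?_⟩
  have hVK : V ≤ K := Submodule.span_le.2 hsK
  have hnear : ∀ v, ‖T v - T (V.starProjection (P v))‖ ≤ ε / 2 * ‖v‖ := by
    intro v
    set w := P v - V.starProjection (P v)
    have hwK : w ∈ K := K.sub_mem (hP v) (hVK (V.starProjection_apply_mem _))
    have hw : ∀ x ∈ s, inner ℝ x w = 0 := fun x hx =>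
      Submodule.inner_right_of_mem_orthogonal (Submodule.subset_span hx)
        (V.sub_starProjection_mem_orthogonal _)
    have hwP : ‖w‖ ≤ ‖P v‖ := by
      simpa [w, Submodule.starProjection_orthogonal] using
        Vᗮ.norm_starProjection_apply_le (P v)
    calc ‖T v - T (V.starProjection (P v))‖ = ‖T w‖ := by rw [hTP v, map_sub]
      _ ≤ ε / (2 * (‖P‖ + 1)) * ‖w‖ := hs w hwK hw
      _ ≤ ε / (2 * (‖P‖ + 1)) * (‖P‖ * ‖v‖) := by gcongr; exact hwP.trans (P.le_opNorm v)
      _ ≤ ε / 2 * ‖v‖ := by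
        rw [← mul_assoc]
        gcongr
        rw [div_mul_eq_mul_div, div_le_div_iff₀ (by positivity) two_pos]
        nlinarith
  rw [dist_eq_norm]
  exact ((T - _).opNorm_le_bound (by positivity) hnear).trans_lt (half_lt_self hε)

theorem exists_orthonormal_seq_of_not_isCompactOperator {F G : Type*} [NormedAddCommGroup F]
    [InnerProductSpace ℝ F] [NormedAddCommGroup G] [NormedSpace ℝ G] [CompleteSpace G]
    (K : Submodule ℝ F) (P : F →L[ℝ] F) (hP : ∀ v, P v ∈ K) (T : F →L[ℝ] G)
    (hTP : ∀ v, T v = T (P v)) (hT : ¬ IsCompactOperator T) :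
    ∃ ε > 0, ∃ e : ℕ → F, Orthonormal ℝ e ∧ ∀ n, e n ∈ K ∧ ε ≤ ‖T (e n)‖ := by
  obtain ⟨ε, hε, hnext⟩ : ∃ ε > 0, ∀ s : Finset F, (s : Set F) ⊆ K →
      ∃ y, (y ∈ K ∧ ‖y‖ = 1 ∧ ε ≤ ‖T y‖) ∧ ∀ x ∈ s, inner ℝ x y = 0 := by
    by_contra! h
    refine hT (isCompactOperator_of_forall_small_on_orthogonal K P hP T hTP fun δ hδ => ?_)
    obtain ⟨s, hsK, hs⟩ := h δ hδ
    refine ⟨s, hsK, fun y hy hys => ?_⟩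
    rcases eq_or_ne y 0 with rfl | hy0
    · simp
    by_contra! hlt
    obtain ⟨x, hx, hne⟩ := hs (‖y‖⁻¹ • y) ⟨K.smul_mem _ hy, norm_smul_inv_norm hy0, by
      rw [map_smul, norm_smul, norm_inv, norm_norm, le_inv_mul_iff₀ (norm_pos_iff.2 hy0)]
      linarith⟩
    exact hne (by rw [inner_smul_right, hys x hx, mul_zero])
  have : Std.Symm fun x y : F => inner ℝ x y = 0 := ⟨fun x y h => by rwa [real_inner_comm]⟩
  obtain ⟨e, he, hpair⟩ := exists_seq_of_forall_finset_exists' _ _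
    fun s hs => hnext s fun x hx => (hs x hx).1
  exact ⟨ε, hε, e, ⟨fun n => (he n).2.1, hpair⟩, fun n => ⟨(he n).1, (he n).2.2⟩⟩

theorem Orthonormal.tendsto_inner_right_zero {𝕜 F : Type*} [RCLike 𝕜] [NormedAddCommGroup F]
    [InnerProductSpace 𝕜 F] {e : ℕ → F} (he : Orthonormal 𝕜 e) (x : F) :
    Tendsto (fun n => inner 𝕜 x (e n)) atTop (𝓝 0) := by
  have hsq := (he.inner_products_summable (x := x)).tendsto_atTop_zero.sqrt
  rw [Real.sqrt_zero] at hsq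
  refine tendsto_zero_iff_norm_tendsto_zero.2 (hsq.congr fun n => ?_)
  rw [Real.sqrt_sq (norm_nonneg _), norm_inner_symm]

theorem tendsto_inner_zero_of_forall_tendsto_re_inner_zero {e : ℕ → E}
    (h : ∀ x, Tendsto (fun n => (inner ℂ x (e n)).re) atTop (𝓝 0)) (x : E) :
    Tendsto (fun n => inner ℂ x (e n)) atTop (𝓝 0) := by
  refine squeeze_zero_norm (fun n => Complex.norm_le_abs_re_add_abs_im _) ?_
  simpa using (h x).abs.add (h (I • x)).abs

section Antiunitary

variable {J : E → E}
  (hJinner : ∀ x y : E, inner ℂ (J x) (J y) = inner ℂ y x)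
include hJinner

theorem norm_apply_eq_of_inner_apply_apply (x : E) : ‖J x‖ = ‖x‖ := by
  rw [@norm_eq_sqrt_re_inner ℂ, @norm_eq_sqrt_re_inner ℂ, hJinner]

theorem inner_apply_right_eq_conj (hJinv : ∀ x, J (J x) = x) (x y : E) :
    inner ℂ x (J y) = starRingEnd ℂ (inner ℂ (J x) y) := by
  simpa [hJinv, inner_conj_symm] using hJinner (J x) y

theorem tendsto_inner_apply_zero (hJinv : ∀ x, J (J x) = x) {e : ℕ → E}
    (he : ∀ x, Tendsto (fun n => inner ℂ x (e n)) atTop (𝓝 0)) (x : E) :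
    Tendsto (fun n => inner ℂ x (J (e n))) atTop (𝓝 0) := by
  have hconj := (Complex.continuous_conj.tendsto 0).comp (he (J x))
  rw [map_zero] at hconj
  exact hconj.congr fun n => (inner_apply_right_eq_conj hJinner hJinv x (e n)).symm

end Antiunitary

/-- `J` is the modular conjugation of `H` and `T = Δ_H^{1/4} E_K`, characterized by
`T ∘ E_K = T` and `⟨k, J k⟩ = ‖T k‖²` on `K`. -/
theorem stmt10_general {E : Type*} [NormedAddCommGroup E] [InnerProductSpace ℂ E] [CompleteSpace E]
    (H K : Submodule ℝ E)
    (hKH : K ≤ H)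
    (J : E → E)
    (hJinv : ∀ x : E, J (J x) = x)
    (hJinner : ∀ x y : E, (inner ℂ (J x) (J y) : ℂ) = inner ℂ y x)
    (hJH : J '' (H : Set E) = (sympl H : Set E))
    (EK : E →L[ℝ] E) (hEKmem : ∀ v : E, EK v ∈ K)
    (T : E →L[ℝ] E)
    (hTE : ∀ v : E, T v = T (EK v))
    (hT : ∀ k ∈ K, (inner ℂ k (J k) : ℂ) = ((‖T k‖ ^ 2 : ℝ) : ℂ))
    (hnc : ¬ IsCompactOperator (⇑T)) :
    ∃ k : ℕ → E, ∃ h' : ℕ → E,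
      (∀ n, k n ∈ K ∧ ‖k n‖ = 1) ∧
      (∀ n, h' n ∈ sympl H ∧ ‖h' n‖ = 1) ∧
      (∀ x : E, Filter.Tendsto (fun n => (inner ℂ x (k n) : ℂ)) Filter.atTop (nhds 0)) ∧
      (∀ x : E, Filter.Tendsto (fun n => (inner ℂ x (h' n) : ℂ)) Filter.atTop (nhds 0)) ∧
      ¬ Filter.Tendsto (fun n => (inner ℂ (h' n) (k n) : ℂ)) Filter.atTop (nhds 0) := by
  let _ : InnerProductSpace ℝ E := InnerProductSpace.rclikeToReal ℂ E
  obtain ⟨ε, hε, e, he, heK⟩ :=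
    exists_orthonormal_seq_of_not_isCompactOperator K EK hEKmem T hTE hnc
  have hweak : ∀ x, Tendsto (fun n => inner ℂ x (e n)) atTop (𝓝 0) :=
    tendsto_inner_zero_of_forall_tendsto_re_inner_zero he.tendsto_inner_right_zero
  have hlarge : ∀ n, ε ^ 2 ≤ ‖inner ℂ (J (e n)) (e n)‖ := fun n => by
    rw [← inner_conj_symm, hT _ (heK n).1, Complex.conj_ofReal, Complex.norm_real,
      Real.norm_of_nonneg (by positivity)]
    exact pow_le_pow_left₀ hε.le (heK n).2 2
  have hmem : ∀ n, J (e n) ∈ sympl H := fun n =>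
    (hJH ▸ ⟨e n, hKH (heK n).1, rfl⟩ : J (e n) ∈ (sympl H : Set E))
  refine ⟨e, fun n => J (e n), fun n => ⟨(heK n).1, he.1 n⟩,
    fun n => ⟨hmem n, (norm_apply_eq_of_inner_apply_apply hJinner _).trans (he.1 n)⟩,
    hweak, tendsto_inner_apply_zero hJinner hJinv hweak, fun hlim => ?_⟩
  obtain ⟨n, hn⟩ := (hlim.norm.eventually (gt_mem_nhds (by simpa using pow_pos hε 2))).exists
  exact (hlarge n).not_gt hn

/-- If `Δ_H^{1/4} E_K` is not compact, there are weak-null sequences of unit vectors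
`k_n ∈ K`, `h'_n ∈ H'` with `⟨h'_n, k_n⟩ ↛ 0`. Here `J` is the modular conjugation of `H`
and `T = Δ_H^{1/4} E_K`, characterized by `T ∘ E_K = T` and `⟨k, J k⟩ = ‖T k‖²` on `K`. -/
theorem stmt10 {E : Type*} [NormedAddCommGroup E] [InnerProductSpace ℂ E] [CompleteSpace E]
    (H K : Submodule ℝ E) (hH : IsStandardSubspace H) (hK : IsStandardSubspace K)
    (hKH : K ≤ H)
    (J : E → E)
    (hJadd : ∀ x y : E, J (x + y) = J x + J y)
    (hJsmul : ∀ (c : ℂ) (x : E), J (c • x) = (starRingEnd ℂ) c • J x)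
    (hJinv : ∀ x : E, J (J x) = x)
    (hJinner : ∀ x y : E, (inner ℂ (J x) (J y) : ℂ) = inner ℂ y x)
    (hJH : J '' (H : Set E) = (sympl H : Set E))
    (EK : E →L[ℝ] E) (hEKmem : ∀ v : E, EK v ∈ K) (hEKfix : ∀ k ∈ K, EK k = k)
    (hEKsa : ∀ v w : E, (inner ℂ (EK v) w : ℂ).re = (inner ℂ v (EK w) : ℂ).re)
    (T : E →L[ℝ] E)
    (hTE : ∀ v : E, T v = T (EK v))
    (hT : ∀ k ∈ K, (inner ℂ k (J k) : ℂ) = ((‖T k‖ ^ 2 : ℝ) : ℂ))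
    (hnc : ¬ IsCompactOperator (⇑T)) :
    ∃ k : ℕ → E, ∃ h' : ℕ → E,
      (∀ n, k n ∈ K ∧ ‖k n‖ = 1) ∧
      (∀ n, h' n ∈ sympl H ∧ ‖h' n‖ = 1) ∧
      (∀ x : E, Filter.Tendsto (fun n => (inner ℂ x (k n) : ℂ)) Filter.atTop (nhds 0)) ∧
      (∀ x : E, Filter.Tendsto (fun n => (inner ℂ x (h' n) : ℂ)) Filter.atTop (nhds 0)) ∧
      ¬ Filter.Tendsto (fun n => (inner ℂ (h' n) (k n) : ℂ)) Filter.atTop (nhds 0) :=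
  stmt10_general H K hKH J hJinv hJinner hJH EK hEKmem T hTE hT hnc
end

section
/- Let K be a standard subspace of ℋ, F ⊆ ℋ a closed real subspace, and H := closure(K + F). Then (iH) ∩ K′ = closure(E_{K′}(iF)), where E_{K′} is the real-orthogonal projection onto K′. Consequently K′ = H′ ⊕_ℝ closure(E_{K′}(iF)). -/
open Complex Submodule Filter Topology

variable {E : Type*} [NormedAddCommGroup E] [InnerProductSpace ℂ E]

/-! With respect to `Re ⟪·,·⟫` the symplectic complement is an orthogonal complement,
`K' = (iK)ᗮ`, so `E_{K'}` is the orthogonal projection onto `K'`. It kills `iK` and moves points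
only within `K'ᗮ = closure (iK) ⊆ iH`; hence it maps `iH = closure (iK + iF)` into
`closure (E_{K'}(iF)) ⊆ iH ∩ K'`, and it fixes `iH ∩ K'`. For `a ∈ K'` we have
`Re ⟪a, E_{K'}(i f)⟫ = Re ⟪a, i f⟫ = -Im ⟪a, f⟫`, so `H' = K' ∩ F' = K' ∩ (E_{K'}(iF))ᗮ`, and the
decomposition of `K'` is the orthogonal one along the closed subspace
`closure (E_{K'}(iF)) ⊆ K'`. -/

namespace Submodule

variable {V : Type*} [NormedAddCommGroup V] [InnerProductSpace ℝ V]
  {U : Submodule ℝ V} [U.HasOrthogonalProjection]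

theorem eq_starProjection_of_isSymmetric {P : V →L[ℝ] V} (hmem : ∀ v, P v ∈ U)
    (hfix : ∀ v ∈ U, P v = v) (hsymm : (P : V →ₗ[ℝ] V).IsSymmetric) :
    P = U.starProjection := by
  ext v
  refine (eq_starProjection_of_mem_of_inner_eq_zero (hmem v) fun w hw => ?_).symm
  rw [inner_sub_left, ← ContinuousLinearMap.coe_coe P, hsymm, ContinuousLinearMap.coe_coe,
    hfix w hw, sub_self]

theorem map_starProjection_le (W : Submodule ℝ V) : W.map (U.starProjection : V →ₗ[ℝ] V) ≤ U := by
  rintro _ ⟨w, -, rfl⟩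
  exact U.starProjection_apply_mem w

theorem map_starProjection_eq_bot {W : Submodule ℝ V} (h : W ≤ Uᗮ) :
    W.map (U.starProjection : V →ₗ[ℝ] V) = ⊥ := by
  rw [eq_bot_iff]
  rintro _ ⟨w, hw, rfl⟩
  exact starProjection_apply_eq_zero_iff U |>.mpr (h hw)

theorem map_starProjection_le_of_orthogonal_le {W : Submodule ℝ V} (h : Uᗮ ≤ W) :
    W.map (U.starProjection : V →ₗ[ℝ] V) ≤ W := by
  rintro _ ⟨w, hw, rfl⟩
  change U.starProjection w ∈ W
  rw [← sub_sub_cancel w (U.starProjection w)]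
  exact W.sub_mem hw (h (sub_starProjection_mem_orthogonal w))

theorem inf_orthogonal_map_starProjection (W : Submodule ℝ V) :
    U ⊓ (W.map (U.starProjection : V →ₗ[ℝ] V))ᗮ = U ⊓ Wᗮ := by
  ext v
  simp only [mem_inf, and_congr_right_iff]
  intro hv
  have key (w : V) : inner ℝ (U.starProjection w) v = inner ℝ w v := by
    rw [inner_starProjection_left_eq_right, starProjection_eq_self_iff.mpr hv]
  constructor
  · intro h w hw
    rw [← key]
    exact h _ (mem_map_of_mem hw)
  · rintro h _ ⟨w, hw, rfl⟩
    exact (key w).trans (h w hw)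

end Submodule

section Symplectic

attribute [local instance] InnerProductSpace.complexToReal

theorem re_inner_mulI_right (v w : E) :
    (inner ℂ v (mulI E w) : ℂ).re = -(inner ℂ v w : ℂ).im := by
  simp [mulI, Complex.mul_re]

variable (E) in
noncomputable def mulIₗᵢ : E ≃ₗᵢ[ℝ] E where
  toLinearEquiv := .ofLinearMap (mulI E) (-mulI E) (by ext; simp [mulI, smul_smul])
    (by ext; simp [mulI, smul_smul])
  norm_map' x := by simp [mulI, norm_smul]

theorem sympl_eq_orthogonal (K : Submodule ℝ E) : sympl K = (K.map (mulI E))ᗮ := by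
  ext v
  rw [mem_orthogonal']
  constructor
  · rintro hv _ ⟨k, hk, rfl⟩
    change (inner ℂ v (mulI E k)).re = 0
    rw [re_inner_mulI_right, hv k hk, neg_zero]
  · intro hv k hk
    have := hv _ (mem_map_of_mem hk)
    change (inner ℂ v (mulI E k)).re = 0 at this
    rwa [re_inner_mulI_right, neg_eq_zero] at this

theorem isClosed_sympl (K : Submodule ℝ E) : IsClosed (sympl K : Set E) := by
  rw [sympl_eq_orthogonal]
  exact isClosed_orthogonal _

theorem sympl_anti {K L : Submodule ℝ E} (h : K ≤ L) : sympl L ≤ sympl K :=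
  fun _ hv k hk => hv k (h hk)

theorem sympl_sup (K L : Submodule ℝ E) : sympl (K ⊔ L) = sympl K ⊓ sympl L := by
  simp only [sympl_eq_orthogonal, Submodule.map_sup, inf_orthogonal]

theorem sympl_topologicalClosure (K : Submodule ℝ E) : sympl K.topologicalClosure = sympl K := by
  refine le_antisymm (sympl_anti K.le_topologicalClosure) ?_
  rw [sympl_eq_orthogonal, sympl_eq_orthogonal, ← orthogonal_closure]
  have := K.topologicalClosure_map ((mulIₗᵢ E).toContinuousLinearEquiv : E →L[ℝ] E)
  exact orthogonal_le this

theorem orthogonal_sympl [CompleteSpace E] {K : Submodule ℝ E} (hK : IsClosed (K : Set E)) :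
    (sympl K)ᗮ = K.map (mulI E) := by
  have := hK.completeSpace_coe
  have : (K.map (mulI E)).HasOrthogonalProjection :=
    HasOrthogonalProjection.map_linearIsometryEquiv K (mulIₗᵢ E)
  rw [sympl_eq_orthogonal, orthogonal_orthogonal]

theorem map_mulI_topologicalClosure_sup_inf_sympl [CompleteSpace E] (K F : Submodule ℝ E)
    [(sympl K).HasOrthogonalProjection] :
    (K ⊔ F).topologicalClosure.map (mulI E) ⊓ sympl K =
      ((F.map (mulI E)).map ((sympl K).starProjection : E →ₗ[ℝ] E)).topologicalClosure := by
  set P : E →L[ℝ] E := (sympl K).starProjection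
  set H := (K ⊔ F).topologicalClosure
  have hiK : K.map (mulI E) ≤ (sympl K)ᗮ := by
    rw [sympl_eq_orthogonal]
    exact le_orthogonal_orthogonal _
  have hH : (sympl H)ᗮ = H.map (mulI E) := orthogonal_sympl (K ⊔ F).isClosed_topologicalClosure
  have hiH : (sympl K)ᗮ ≤ H.map (mulI E) :=
    hH ▸ orthogonal_le (sympl_anti (le_sup_left.trans (K ⊔ F).le_topologicalClosure))
  refine le_antisymm ?_ (le_inf ?_ ?_)
  · rintro v ⟨hvH, hvK⟩
    rw [← starProjection_eq_self_iff.mpr hvK]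
    have hQ : H.map ((P : E →ₗ[ℝ] E).comp (mulI E)) ≤
        ((K ⊔ F).map ((P : E →ₗ[ℝ] E).comp (mulI E))).topologicalClosure :=
      (K ⊔ F).topologicalClosure_map (P.comp ((mulIₗᵢ E).toContinuousLinearEquiv : E →L[ℝ] E))
    rw [Submodule.map_sup, Submodule.map_comp, Submodule.map_comp, Submodule.map_comp,
      map_starProjection_eq_bot hiK, bot_sup_eq] at hQ
    exact hQ (mem_map_of_mem hvH)
  · refine topologicalClosure_minimal _ ?_ (hH ▸ isClosed_orthogonal _)
    have hFH : F ≤ H := le_sup_right.trans (K ⊔ F).le_topologicalClosure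
    exact (Submodule.map_mono (Submodule.map_mono hFH)).trans
      (map_starProjection_le_of_orthogonal_le hiH)
  · exact topologicalClosure_minimal _ (map_starProjection_le _) (isClosed_sympl K)

end Symplectic

theorem stmt12_general {E : Type*} [NormedAddCommGroup E] [InnerProductSpace ℂ E] [CompleteSpace E]
    (K : Submodule ℝ E)
    (F : Submodule ℝ E)
    (EK' : E →L[ℝ] E)
    (hEK'mem : ∀ v : E, EK' v ∈ sympl K) (hEK'fix : ∀ v ∈ sympl K, EK' v = v)
    (hEK'sa : ∀ v w : E, (inner ℂ (EK' v) w : ℂ).re = (inner ℂ v (EK' w) : ℂ).re)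
    (H : Submodule ℝ E) (hHdef : H = (K ⊔ F).topologicalClosure) :
    ((H.map (mulI E) : Submodule ℝ E) : Set E) ∩ (sympl K : Set E)
        = closure (EK' '' ((mulI E) '' (F : Set E))) ∧
    (∀ a ∈ sympl H, ∀ b ∈ closure (EK' '' ((mulI E) '' (F : Set E))),
        (inner ℂ a b : ℂ).re = 0) ∧
    (∀ v ∈ sympl K, ∃ a ∈ sympl H,
        ∃ b ∈ closure (EK' '' ((mulI E) '' (F : Set E))), v = a + b) := by
  let : InnerProductSpace ℝ E := InnerProductSpace.complexToReal
  have := (isClosed_sympl K).completeSpace_coe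
  obtain rfl : EK' = (sympl K).starProjection :=
    eq_starProjection_of_isSymmetric hEK'mem hEK'fix hEK'sa
  subst hHdef
  set M := ((F.map (mulI E)).map ((sympl K).starProjection : E →ₗ[ℝ] E)).topologicalClosure
  have hM : closure ((sympl K).starProjection '' (mulI E '' F)) = (M : Set E) := by
    rw [topologicalClosure_coe, map_coe, map_coe]
    rfl
  have hsymplH : sympl (K ⊔ F).topologicalClosure = sympl K ⊓ Mᗮ := by
    rw [sympl_topologicalClosure, sympl_sup, sympl_eq_orthogonal F, orthogonal_closure,
      inf_orthogonal_map_starProjection]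
  have hiH := map_mulI_topologicalClosure_sup_inf_sympl K F
  have hMK : M ≤ sympl K := hiH.symm.trans_le inf_le_right
  have : CompleteSpace M := (isClosed_topologicalClosure _).completeSpace_coe
  rw [hM]
  refine ⟨congrArg ((↑) : Submodule ℝ E → Set E) hiH, fun a ha b hb => ?_, fun v hv => ?_⟩
  · exact inner_left_of_mem_orthogonal hb (hsymplH ▸ ha).2
  · rw [← sup_orthogonal_inf_of_hasOrthogonalProjection hMK, Submodule.mem_sup] at hv
    obtain ⟨b, hb, a, ha, rfl⟩ := hv
    exact ⟨a, hsymplH ▸ ⟨ha.2, ha.1⟩, b, hb, add_comm b a⟩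

/-- For `H = closure (K + F)`: `(iH) ∩ K' = closure (E_{K'}(iF))`, and consequently
`K' = H' ⊕ᵣ closure (E_{K'}(iF))` as a real-orthogonal direct sum. -/
theorem stmt12 {E : Type*} [NormedAddCommGroup E] [InnerProductSpace ℂ E] [CompleteSpace E]
    (K : Submodule ℝ E) (hK : IsStandardSubspace K)
    (F : Submodule ℝ E) (hF : IsClosed (F : Set E))
    (EK' : E →L[ℝ] E)
    (hEK'mem : ∀ v : E, EK' v ∈ sympl K) (hEK'fix : ∀ v ∈ sympl K, EK' v = v)
    (hEK'sa : ∀ v w : E, (inner ℂ (EK' v) w : ℂ).re = (inner ℂ v (EK' w) : ℂ).re)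
    (H : Submodule ℝ E) (hHdef : H = (K ⊔ F).topologicalClosure) :
    ((H.map (mulI E) : Submodule ℝ E) : Set E) ∩ (sympl K : Set E)
        = closure (EK' '' ((mulI E) '' (F : Set E))) ∧
    (∀ a ∈ sympl H, ∀ b ∈ closure (EK' '' ((mulI E) '' (F : Set E))),
        (inner ℂ a b : ℂ).re = 0) ∧
    (∀ v ∈ sympl K, ∃ a ∈ sympl H,
        ∃ b ∈ closure (EK' '' ((mulI E) '' (F : Set E))), v = a + b) :=
  stmt12_general K F EK' hEK'mem hEK'fix hEK'sa H hHdef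
end

section
/- Consider ℋ = L²(ℝ, dθ), (Δ^{it}ψ)(θ) = ψ(θ − 2πt), (Jψ)(θ) = conj(ψ(θ)), and the standard subspace H = {ψ ∈ H²(S_π) : conj(ψ(θ + iπ)) = ψ(θ) for a.e. θ}, where H²(S_π) is the Hardy space of the strip 0 < Im ζ < π realized inside L²(ℝ) via boundary values. Then the antiunitary involution (Yψ)(θ) = conj(ψ(−θ)) satisfies YH = H. -/
open Complex MeasureTheory Filter Topology
open scoped ComplexConjugate

/-!
The reflection `ζ ↦ -conj ζ` in the imaginary axis maps every horizontal line
`Im ζ = y` onto itself, reversing its orientation. Hence if `F` is a holomorphic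
extension of `ψ` to the strip, then `ζ ↦ conj (F (-conj ζ))` is a holomorphic extension of
`θ ↦ conj (ψ (-θ))` with the same `L²` norms on horizontal lines, and the reality condition on
the upper boundary is carried along. Since `Y` is an involution, `Y H ⊆ H` gives `Y H = H`.
-/

/-- The strip-picture lift of `(Yψ)(θ) = conj (ψ (-θ))` to functions on `ℂ`. -/
def conjReflect (F : ℂ → ℂ) : ℂ → ℂ := fun ζ => conj (F (-conj ζ))

lemma neg_conj_ofReal_add_mul_I (θ y : ℝ) :
    -conj ((θ : ℂ) + y * I) = ((-θ : ℝ) : ℂ) + y * I := by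
  apply Complex.ext <;> simp

lemma conjReflect_ofReal_add_mul_I (F : ℂ → ℂ) (θ y : ℝ) :
    conjReflect F ((θ : ℂ) + y * I) = conj (F (((-θ : ℝ) : ℂ) + y * I)) := by
  rw [conjReflect, neg_conj_ofReal_add_mul_I]

lemma DifferentiableAt.conjReflect {F : ℂ → ℂ} {z : ℂ}
    (hF : DifferentiableAt ℂ F (-conj z)) : DifferentiableAt ℂ (conjReflect F) z := by
  have hneg : DifferentiableAt ℂ (F ∘ Neg.neg) (conj z) :=
    hF.comp (conj z) differentiableAt_id.neg
  exact differentiableAt_conj_conj_iff.mpr (by simpa using hneg)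

lemma DifferentiableOn.conjReflect {F : ℂ → ℂ} {s : Set ℂ} (hs : IsOpen s)
    (hrefl : Set.MapsTo (fun ζ => -conj ζ) s s) (hF : DifferentiableOn ℂ F s) :
    DifferentiableOn ℂ (conjReflect F) s := fun _ hz =>
  ((hF.differentiableAt (hs.mem_nhds (hrefl hz))).conjReflect).differentiableWithinAt

lemma isOpen_horizontalStrip (a b : ℝ) : IsOpen {ζ : ℂ | a < ζ.im ∧ ζ.im < b} :=
  isOpen_Ioo.preimage continuous_im

lemma mapsTo_neg_conj_horizontalStrip (a b : ℝ) :
    Set.MapsTo (fun ζ : ℂ => -conj ζ) {ζ : ℂ | a < ζ.im ∧ ζ.im < b}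
      {ζ : ℂ | a < ζ.im ∧ ζ.im < b} := fun ζ hζ => by
  simpa using hζ

lemma lintegral_nnnorm_conjReflect_sq (F : ℂ → ℂ) (y : ℝ) :
    ∫⁻ θ : ℝ, (‖conjReflect F ((θ : ℂ) + y * I)‖₊ : ENNReal) ^ 2
      = ∫⁻ θ : ℝ, (‖F ((θ : ℂ) + y * I)‖₊ : ENNReal) ^ 2 := by
  simp only [conjReflect_ofReal_add_mul_I, RCLike.nnnorm_conj]
  exact lintegral_neg_eq_self (fun θ : ℝ => (‖F ((θ : ℂ) + y * I)‖₊ : ENNReal) ^ 2)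

lemma ae_tendsto_conjReflect {F : ℂ → ℂ} {φ : ℝ → ℂ} {l : Filter ℝ}
    (hF : ∀ᵐ θ : ℝ, Tendsto (fun y : ℝ => F ((θ : ℂ) + y * I)) l (𝓝 (φ θ))) :
    ∀ᵐ θ : ℝ, Tendsto (fun y : ℝ => conjReflect F ((θ : ℂ) + y * I)) l
      (𝓝 (conj (φ (-θ)))) := by
  filter_upwards [(Measure.measurePreserving_neg volume).quasiMeasurePreserving.ae hF]
    with θ hθ
  simp only [conjReflect_ofReal_add_mul_I]
  exact hθ.star

lemma MemLp.conj_comp_neg {ψ : ℝ → ℂ} {p : ENNReal} (hψ : MemLp ψ p volume) :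
    MemLp (fun θ => conj (ψ (-θ))) p volume :=
  (hψ.comp_measurePreserving (Measure.measurePreserving_neg volume)).star

lemma conj_comp_neg_involutive :
    Function.Involutive (fun ψ : ℝ → ℂ => fun θ => conj (ψ (-θ))) := fun ψ => by
  funext θ
  simp

lemma Function.Involutive.image_eq_self_of_mapsTo {α : Type*} {f : α → α} {s : Set α}
    (hf : Function.Involutive f) (hs : Set.MapsTo f s s) : f '' s = s :=
  (hs.image_subset).antisymm fun x hx => ⟨f x, hs hx, hf x⟩

/-- The standard subspace `H ⊆ H²(S_π)`. -/
def stripStandardSubspace : Set (ℝ → ℂ) :=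
  {ψ : ℝ → ℂ | MemLp ψ 2 (volume : Measure ℝ) ∧
      ∃ F : ℂ → ℂ,
        DifferentiableOn ℂ F {ζ : ℂ | 0 < ζ.im ∧ ζ.im < Real.pi} ∧
        (∃ C : ENNReal, C ≠ ⊤ ∧ ∀ y ∈ Set.Ioo (0 : ℝ) Real.pi,
          (∫⁻ θ : ℝ, (‖F ((θ : ℂ) + (y : ℂ) * Complex.I)‖₊ : ENNReal) ^ 2) ≤ C) ∧
        (∀ᵐ θ : ℝ, Filter.Tendsto (fun y : ℝ => F ((θ : ℂ) + (y : ℂ) * Complex.I))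
          (nhdsWithin 0 (Set.Ioi 0)) (nhds (ψ θ))) ∧
        (∀ᵐ θ : ℝ, Filter.Tendsto (fun y : ℝ => F ((θ : ℂ) + (y : ℂ) * Complex.I))
          (nhdsWithin Real.pi (Set.Iio Real.pi)) (nhds ((starRingEnd ℂ) (ψ θ))))}

lemma mapsTo_conj_comp_neg_stripStandardSubspace :
    Set.MapsTo (fun ψ : ℝ → ℂ => fun θ => conj (ψ (-θ)))
      stripStandardSubspace stripStandardSubspace := by
  rintro ψ ⟨hL2, F, hF, ⟨C, hC, hbound⟩, hlower, hupper⟩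
  refine ⟨MemLp.conj_comp_neg hL2, conjReflect F, ?_, ⟨C, hC, fun y hy => ?_⟩,
    ae_tendsto_conjReflect hlower, ae_tendsto_conjReflect hupper⟩
  · exact hF.conjReflect (isOpen_horizontalStrip 0 Real.pi)
      (mapsTo_neg_conj_horizontalStrip 0 Real.pi)
  · exact (lintegral_nnnorm_conjReflect_sq F y).trans_le (hbound y hy)

/-- The standard subspace of the irreducible standard pair in the strip picture:
`H = {ψ ∈ H²(S_π) : conj (ψ(θ + iπ)) = ψ(θ)}`, realized as those square-integrable
functions on `ℝ` that are boundary values of a holomorphic function `F` on the strip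
`0 < Im ζ < π` with uniformly `L²`-bounded horizontal sections, whose boundary value
at `Im ζ = π` is the complex conjugate of the one at `Im ζ = 0`. The antiunitary
involution `(Yψ)(θ) = conj (ψ(−θ))` satisfies `YH = H`. -/
theorem stmt19 (H : Set (ℝ → ℂ))
    (hHdef : H = {ψ : ℝ → ℂ | MemLp ψ 2 (volume : Measure ℝ) ∧
      ∃ F : ℂ → ℂ,
        DifferentiableOn ℂ F {ζ : ℂ | 0 < ζ.im ∧ ζ.im < Real.pi} ∧
        (∃ C : ENNReal, C ≠ ⊤ ∧ ∀ y ∈ Set.Ioo (0 : ℝ) Real.pi,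
          (∫⁻ θ : ℝ, (‖F ((θ : ℂ) + (y : ℂ) * Complex.I)‖₊ : ENNReal) ^ 2) ≤ C) ∧
        (∀ᵐ θ : ℝ, Filter.Tendsto (fun y : ℝ => F ((θ : ℂ) + (y : ℂ) * Complex.I))
          (nhdsWithin 0 (Set.Ioi 0)) (nhds (ψ θ))) ∧
        (∀ᵐ θ : ℝ, Filter.Tendsto (fun y : ℝ => F ((θ : ℂ) + (y : ℂ) * Complex.I))
          (nhdsWithin Real.pi (Set.Iio Real.pi)) (nhds ((starRingEnd ℂ) (ψ θ))))}) :
    (fun ψ : ℝ → ℂ => fun θ : ℝ => (starRingEnd ℂ) (ψ (-θ))) '' H = H := by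
  change H = stripStandardSubspace at hHdef
  subst hHdef
  exact conj_comp_neg_involutive.image_eq_self_of_mapsTo
    mapsTo_conj_comp_neg_stripStandardSubspace
end
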